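/- Let X be a digraph on a nonempty finite vertex set V whose underlying graph Γ(X) is connected, and let k ≥ 1 be a natural number. Then λ₁(H_k(X)) ≤ ρ(H_k(X)) ≤ 3 · λ₁(H_k(X)), where λ₁(H_k(X)) is the largest eigenvalue of H_k(X) and ρ(H_k(X)) is its spectral radius. -/

import Mathlib

open SimpleGraph

/-- The gain of a walk: the product of the entries of `A` along the darts of the walk. -/
noncomputable def gainOfWalk {V : Type*} {G : SimpleGraph V} (A : Matrix V V ℂ)
    {u v : V} (w : G.Walk u v) : ℂ :=
  (w.darts.map fun d => A d.fst d.snd).prod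

/-- The largest eigenvalue of a Hermitian matrix. -/
noncomputable def lambdaMax {V : Type*} [Fintype V] [DecidableEq V] {𝕜 : Type*} [RCLike 𝕜]
    (A : Matrix V V 𝕜) (hA : A.IsHermitian) : ℝ :=
  ⨆ i, hA.eigenvalues i

/-- The spectral radius of a Hermitian matrix: the largest absolute value of an eigenvalue. -/
noncomputable def specRad {V : Type*} [Fintype V] [DecidableEq V] {𝕜 : Type*} [RCLike 𝕜]
    (A : Matrix V V 𝕜) (hA : A.IsHermitian) : ℝ :=
  ⨆ i, |hA.eigenvalues i|

/-- The `k`-generalized Hermitian adjacency matrix of a digraph given by the relation `E`. -/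
noncomputable def genHermMatrix {V : Type*} (E : V → V → Prop) [DecidableRel E] (k : ℕ) :
    Matrix V V ℂ :=
  Matrix.of fun s t =>
    if E s t ∧ E t s then 1
    else if E s t ∧ ¬ E t s then Complex.exp ((Real.pi : ℂ) * Complex.I / (k + 1))
    else if ¬ E s t ∧ E t s then Complex.exp (-((Real.pi : ℂ) * Complex.I) / (k + 1))
    else 0

/-- The `k`-generalized Hermitian adjacency matrix is Hermitian. -/
theorem genHermMatrix_isHermitian {V : Type*} (E : V → V → Prop) [DecidableRel E] (k : ℕ) :
    (genHermMatrix E k).IsHermitian := by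
  ext s t
  by_cases h1 : E s t <;> by_cases h2 : E t s <;>
    simp [genHermMatrix, Matrix.conjTranspose_apply, h1, h2, ← Complex.exp_conj,
      map_div₀, Complex.conj_ofReal]

instance {V : Type*} [DecidableEq V] (E : V → V → Prop) [DecidableRel E] :
    DecidableRel (SimpleGraph.fromRel E).Adj := fun a b =>
  decidable_of_iff _ (SimpleGraph.fromRel_adj E a b).symm

section Aux

open Matrix

variable {V : Type*} [Fintype V] [DecidableEq V]

lemma key_quad (A : Matrix V V ℂ) (hA : A.IsHermitian) (e : V → ℂ) :
    star ((hA.eigenvectorUnitary : Matrix V V ℂ) *ᵥ e) ⬝ᵥ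
      (A *ᵥ ((hA.eigenvectorUnitary : Matrix V V ℂ) *ᵥ e)) =
    ∑ i, (hA.eigenvalues i : ℂ) * (Complex.normSq (e i) : ℂ) := by
  set U : Matrix V V ℂ := (hA.eigenvectorUnitary : Matrix V V ℂ) with hU
  have hsU : star U * U = 1 := by
    simpa [hU] using unitary.coe_star_mul_self hA.eigenvectorUnitary
  have h1 : A *ᵥ (U *ᵥ e) = U *ᵥ ((diagonal (RCLike.ofReal ∘ hA.eigenvalues)) *ᵥ e) := by
    conv_lhs => rw [hA.spectral_theorem]
    rw [Unitary.conjStarAlgAut_apply, mulVec_mulVec, mul_assoc, mul_assoc, hsU, mul_one, ← mulVec_mulVec]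
  rw [h1, star_mulVec, dotProduct_mulVec, vecMul_vecMul]
  rw [show Uᴴ = star U from rfl, hsU, vecMul_one]
  simp only [dotProduct, mulVec_diagonal, Function.comp_apply, Pi.star_apply, RCLike.star_def]
  refine Finset.sum_congr rfl fun i _ => ?_
  rw [show (starRingEnd ℂ) (e i) * (RCLike.ofReal (hA.eigenvalues i) * e i)
      = (RCLike.ofReal (hA.eigenvalues i) : ℂ) * (e i * (starRingEnd ℂ) (e i)) by ring,
    Complex.mul_conj]
  rfl

lemma key_nsq (A : Matrix V V ℂ) (hA : A.IsHermitian) (e : V → ℂ) :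
    star ((hA.eigenvectorUnitary : Matrix V V ℂ) *ᵥ e) ⬝ᵥ
      ((hA.eigenvectorUnitary : Matrix V V ℂ) *ᵥ e) =
    ∑ i, (Complex.normSq (e i) : ℂ) := by
  set U : Matrix V V ℂ := (hA.eigenvectorUnitary : Matrix V V ℂ) with hU
  have hsU : star U * U = 1 := by
    simpa [hU] using unitary.coe_star_mul_self hA.eigenvectorUnitary
  rw [star_mulVec, dotProduct_mulVec, vecMul_vecMul]
  rw [show Uᴴ = star U from rfl, hsU, vecMul_one]
  simp only [dotProduct, Pi.star_apply, RCLike.star_def]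
  refine Finset.sum_congr rfl fun i _ => ?_
  rw [mul_comm, Complex.mul_conj]

variable [Nonempty V]

lemma eig_le_lambdaMax (A : Matrix V V ℂ) (hA : A.IsHermitian) (i : V) :
    hA.eigenvalues i ≤ lambdaMax A hA :=
  le_ciSup (Set.Finite.bddAbove (Set.finite_range _)) i

lemma quad_le_lambdaMax (A : Matrix V V ℂ) (hA : A.IsHermitian) (x : V → ℂ) :
    (star x ⬝ᵥ (A *ᵥ x)).re ≤ lambdaMax A hA * (star x ⬝ᵥ x).re := by
  set U : Matrix V V ℂ := (hA.eigenvectorUnitary : Matrix V V ℂ) with hU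
  have hsU : U * star U = 1 := by
    simpa [hU] using unitary.coe_mul_star_self hA.eigenvectorUnitary
  have hx : U *ᵥ (star U *ᵥ x) = x := by rw [mulVec_mulVec, hsU, one_mulVec]
  set e : V → ℂ := star U *ᵥ x with he
  rw [← hx, key_quad A hA e, key_nsq A hA e, Complex.re_sum, Complex.re_sum]
  have h1 : ∀ i : V, ((hA.eigenvalues i : ℂ) * (Complex.normSq (e i) : ℂ)).re
      = hA.eigenvalues i * Complex.normSq (e i) := by
    intro i; rw [← Complex.ofReal_mul, Complex.ofReal_re]
  have h2 : ∀ i : V, ((Complex.normSq (e i) : ℂ)).re = Complex.normSq (e i) := fun i =>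
    Complex.ofReal_re _
  simp only [h1, h2, Finset.mul_sum]
  refine Finset.sum_le_sum fun i _ => ?_
  exact mul_le_mul_of_nonneg_right (eig_le_lambdaMax A hA i) (Complex.normSq_nonneg _)

lemma exists_eigvec (A : Matrix V V ℂ) (hA : A.IsHermitian) (i : V) :
    ∃ x : V → ℂ, (star x ⬝ᵥ x).re = 1 ∧ (star x ⬝ᵥ (A *ᵥ x)).re = hA.eigenvalues i := by
  refine ⟨(hA.eigenvectorUnitary : Matrix V V ℂ) *ᵥ Pi.single i 1, ?_, ?_⟩
  · rw [key_nsq, Complex.re_sum, Finset.sum_eq_single i]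
    · simp
    · intro j _ hj; simp [Pi.single_apply, hj]
    · simp
  · rw [key_quad, Complex.re_sum, Finset.sum_eq_single i]
    · simp
    · intro j _ hj; simp [Pi.single_apply, hj]
    · simp

lemma quad_transpose (A : Matrix V V ℂ) (x : V → ℂ) :
    star x ⬝ᵥ (Aᵀ *ᵥ x) = star (star x) ⬝ᵥ (A *ᵥ star x) := by
  simp only [dotProduct, mulVec, Pi.star_apply, star_star, transpose_apply, Finset.mul_sum]
  rw [Finset.sum_comm]
  exact Finset.sum_congr rfl fun s _ => Finset.sum_congr rfl fun t _ => by ring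

lemma nsq_star (x : V → ℂ) : (star (star x) ⬝ᵥ star x).re = (star x ⬝ᵥ x).re := by
  simp only [dotProduct, Pi.star_apply, star_star]
  congr 1
  exact Finset.sum_congr rfl fun s _ => by ring

lemma nsq_abs (x : V → ℂ) :
    (star (fun s => (‖x s‖ : ℂ)) ⬝ᵥ (fun s => (‖x s‖ : ℂ))).re = (star x ⬝ᵥ x).re := by
  simp only [dotProduct, Pi.star_apply, Complex.re_sum]
  refine Finset.sum_congr rfl fun s _ => ?_
  have hr : (star (x s) * x s).re = Complex.normSq (x s) := by
    rw [Complex.star_def, mul_comm, Complex.mul_conj, Complex.ofReal_re]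
  have hl : (star ((‖x s‖ : ℂ)) * ((‖x s‖ : ℂ))).re = ‖x s‖ * ‖x s‖ := by
    rw [Complex.star_def, Complex.conj_ofReal, ← Complex.ofReal_mul, Complex.ofReal_re]
  rw [hl, hr, Complex.normSq_eq_norm_sq]
  ring

/-- quadratic form of a matrix with nonneg real entries, at `x` versus at `|x|`. -/
lemma quad_abs (B : Matrix V V ℂ) (hB : ∀ s t, (B s t).im = 0 ∧ 0 ≤ (B s t).re) (x : V → ℂ) :
    0 ≤ (star (fun s => (‖x s‖ : ℂ)) ⬝ᵥ (B *ᵥ fun s => (‖x s‖ : ℂ))).re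
        + (star x ⬝ᵥ (B *ᵥ x)).re := by
  have expand : ∀ y : V → ℂ, (star y ⬝ᵥ (B *ᵥ y)).re
      = ∑ s, ∑ t, (B s t).re * (star (y s) * y t).re := by
    intro y
    simp only [dotProduct, mulVec, Finset.mul_sum, Complex.re_sum, Pi.star_apply]
    refine Finset.sum_congr rfl fun s _ => Finset.sum_congr rfl fun t _ => ?_
    rw [show star (y s) * (B s t * y t) = B s t * (star (y s) * y t) by ring,
      Complex.mul_re, (hB s t).1]
    ring
  rw [expand, expand, ← Finset.sum_add_distrib]
  refine Finset.sum_nonneg fun s _ => ?_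
  rw [← Finset.sum_add_distrib]
  refine Finset.sum_nonneg fun t _ => ?_
  rw [← mul_add]
  refine mul_nonneg (hB s t).2 ?_
  have h1 : (star ((‖x s‖ : ℂ)) * (‖x t‖ : ℂ)).re = ‖x s‖ * ‖x t‖ := by
    rw [show star ((‖x s‖ : ℂ)) * (‖x t‖ : ℂ) = ((‖x s‖ * ‖x t‖ : ℝ) : ℂ) by
      rw [Complex.star_def, Complex.conj_ofReal]; push_cast; ring]
    exact Complex.ofReal_re _
  rw [h1]
  have h2 : -(‖x s‖ * ‖x t‖) ≤ (star (x s) * x t).re := by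
    have h3 := Complex.abs_re_le_norm (star (x s) * x t)
    have habs : ‖star (x s) * x t‖ = ‖x s‖ * ‖x t‖ := by
      rw [norm_mul, norm_star]
    rw [habs] at h3
    linarith [neg_abs_le ((star (x s) * x t).re)]
  linarith

end Aux

open Matrix in
/-- For a digraph whose underlying graph is connected and `k ≥ 1`,
`λ₁(Hₖ(X)) ≤ ρ(Hₖ(X)) ≤ 3λ₁(Hₖ(X))`. -/
theorem stmt_14 {V : Type*} [Fintype V] [Nonempty V] [DecidableEq V]
    (E : V → V → Prop) [DecidableRel E] (hirr : Irreflexive E)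
    (k : ℕ) (hk : 1 ≤ k) (hconn : (SimpleGraph.fromRel E).Connected) :
    lambdaMax (genHermMatrix E k) (genHermMatrix_isHermitian E k) ≤
        specRad (genHermMatrix E k) (genHermMatrix_isHermitian E k) ∧
      specRad (genHermMatrix E k) (genHermMatrix_isHermitian E k) ≤
        3 * lambdaMax (genHermMatrix E k) (genHermMatrix_isHermitian E k) := by
  classical
  set A : Matrix V V ℂ := genHermMatrix E k with hAdef
  have hA : A.IsHermitian := genHermMatrix_isHermitian E k
  set L : ℝ := lambdaMax A hA with hLdef
  -- trace is zero
  have hdiag : ∀ s, A s s = 0 := by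
    intro s; simp [hAdef, genHermMatrix, hirr s]
  have htr : ∑ i, hA.eigenvalues i = 0 := by
    have hsU : star (hA.eigenvectorUnitary : Matrix V V ℂ) *
        (hA.eigenvectorUnitary : Matrix V V ℂ) = 1 := by
      simpa using unitary.coe_star_mul_self hA.eigenvectorUnitary
    have h1 : Matrix.trace A = ∑ i, (hA.eigenvalues i : ℂ) := by
      conv_lhs => rw [hA.spectral_theorem]
      rw [Unitary.conjStarAlgAut_apply, Matrix.trace_mul_cycle, hsU, one_mul, Matrix.trace_diagonal]
      simp
    have h2 : Matrix.trace A = 0 := by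
      simp [Matrix.trace, Matrix.diag, hdiag]
    rw [h2] at h1
    have := congrArg Complex.re h1.symm
    rwa [Complex.re_sum, Complex.zero_re] at this
    -- this : Σ (coerced).re = 0; need simp to real
  have htr' : ∑ i, hA.eigenvalues i = 0 := htr
  have hL0 : 0 ≤ L := by
    by_contra h
    push_neg at h
    have hlt : ∀ i : V, hA.eigenvalues i < 0 := fun i =>
      lt_of_le_of_lt (eig_le_lambdaMax A hA i) h
    have : ∑ i, hA.eigenvalues i < ∑ _i : V, (0 : ℝ) :=
      Finset.sum_lt_sum_of_nonempty Finset.univ_nonempty fun i _ => hlt i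
    simp [htr'] at this
  -- the symmetrized matrix B
  set B : Matrix V V ℂ := A + Aᵀ with hBdef
  have hB : B.IsHermitian := Matrix.IsHermitian.add hA hA.transpose
  -- entries of B are nonnegative reals
  have hexp : Complex.exp ((Real.pi : ℂ) * Complex.I / (k + 1)) +
      Complex.exp (-((Real.pi : ℂ) * Complex.I) / (k + 1)) =
      ((2 * Real.cos (Real.pi / (k + 1)) : ℝ) : ℂ) := by
    have e1 : (Real.pi : ℂ) * Complex.I / (k + 1)
        = ((Real.pi / (k + 1) : ℝ) : ℂ) * Complex.I := by push_cast; ring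
    have e2 : -((Real.pi : ℂ) * Complex.I) / (k + 1)
        = (-((Real.pi / (k + 1) : ℝ)) : ℂ) * Complex.I := by push_cast; ring
    rw [e1, e2, Complex.exp_mul_I, Complex.exp_mul_I, Complex.cos_neg, Complex.sin_neg,
      ← Complex.ofReal_cos]
    push_cast
    ring
  have hcos : 0 ≤ Real.cos (Real.pi / (k + 1)) := by
    have hk2 : (2 : ℝ) ≤ (k : ℝ) + 1 := by
      have : (2 : ℕ) ≤ k + 1 := by omega
      exact_mod_cast this
    have hub : Real.pi / ((k : ℝ) + 1) ≤ Real.pi / 2 := by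
      gcongr
    have hlb : 0 ≤ Real.pi / ((k : ℝ) + 1) := by positivity
    exact Real.cos_nonneg_of_mem_Icc ⟨by linarith [Real.pi_pos], hub⟩
  have hBent : ∀ s t, (B s t).im = 0 ∧ 0 ≤ (B s t).re := by
    intro s t
    have hBst : B s t = A s t + A t s := by
      simp [hBdef, Matrix.add_apply, Matrix.transpose_apply]
    rw [hBst]
    by_cases h1 : E s t <;> by_cases h2 : E t s
    · have hv : A s t + A t s = 2 := by
        simp [hAdef, genHermMatrix, h1, h2]; norm_num
      rw [hv]; norm_num
    · have hv : A s t + A t s = Complex.exp ((Real.pi : ℂ) * Complex.I / (k + 1)) +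
          Complex.exp (-((Real.pi : ℂ) * Complex.I) / (k + 1)) := by
        simp [hAdef, genHermMatrix, h1, h2]
      rw [hv, hexp]
      exact ⟨Complex.ofReal_im _, by rw [Complex.ofReal_re]; linarith⟩
    · have hv : A s t + A t s = Complex.exp (-((Real.pi : ℂ) * Complex.I) / (k + 1)) +
          Complex.exp ((Real.pi : ℂ) * Complex.I / (k + 1)) := by
        simp [hAdef, genHermMatrix, h1, h2]
      rw [hv, add_comm, hexp]
      exact ⟨Complex.ofReal_im _, by rw [Complex.ofReal_re]; linarith⟩
    · have hv : A s t + A t s = 0 := by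
        simp [hAdef, genHermMatrix, h1, h2]
      rw [hv]; norm_num
  -- splitting the quadratic form of B
  have hsplit : ∀ x : V → ℂ, (star x ⬝ᵥ (B *ᵥ x)).re
      = (star x ⬝ᵥ (A *ᵥ x)).re + (star (star x) ⬝ᵥ (A *ᵥ star x)).re := by
    intro x
    rw [hBdef, Matrix.add_mulVec, dotProduct_add, Complex.add_re, quad_transpose]
  -- lambdaMax of B is at most 2L
  have hBL : lambdaMax B hB ≤ 2 * L := by
    refine ciSup_le fun j => ?_
    obtain ⟨x, hx1, hx2⟩ := exists_eigvec B hB j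
    have hq1 : (star x ⬝ᵥ (A *ᵥ x)).re ≤ L := by
      have := quad_le_lambdaMax A hA x
      rwa [hx1, mul_one] at this
    have hq2 : (star (star x) ⬝ᵥ (A *ᵥ star x)).re ≤ L := by
      have := quad_le_lambdaMax A hA (star x)
      rwa [nsq_star, hx1, mul_one] at this
    rw [← hx2, hsplit x]
    linarith
  -- main lower bound on eigenvalues
  have hmain : ∀ i : V, -(3 * L) ≤ hA.eigenvalues i := by
    intro i
    obtain ⟨x, hx1, hx2⟩ := exists_eigvec A hA i
    set a : V → ℂ := fun s => (‖x s‖ : ℂ) with hadef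
    have h3 : 0 ≤ (star a ⬝ᵥ (B *ᵥ a)).re + (star x ⬝ᵥ (B *ᵥ x)).re := quad_abs B hBent x
    have h4 : (star a ⬝ᵥ (B *ᵥ a)).re ≤ 2 * L := by
      have hq := quad_le_lambdaMax B hB a
      rw [hadef] at hq ⊢
      rw [nsq_abs x, hx1, mul_one] at hq
      exact le_trans hq hBL
    have h5 : (star x ⬝ᵥ (B *ᵥ x)).re
        = hA.eigenvalues i + (star (star x) ⬝ᵥ (A *ᵥ star x)).re := by
      rw [hsplit x, hx2]
    have h6 : (star (star x) ⬝ᵥ (A *ᵥ star x)).re ≤ L := by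
      have := quad_le_lambdaMax A hA (star x)
      rwa [nsq_star, hx1, mul_one] at this
    linarith
  -- conclude
  have bdd : BddAbove (Set.range fun i : V => |hA.eigenvalues i|) :=
    Set.Finite.bddAbove (Set.finite_range _)
  constructor
  · refine ciSup_le fun i => ?_
    exact le_trans (le_abs_self _) (le_ciSup bdd i)
  · refine ciSup_le fun i => ?_
    rw [abs_le]
    refine ⟨by simpa using hmain i, ?_⟩
    have := eig_le_lambdaMax A hA i
    linarith
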